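/- Let τ > 0, let φ₀ : ℝ → ℝ be a strictly increasing solution of φ₀'(t) = φ₀(t − τ)(1 − φ₀(t)) with lim_{t→−∞} φ₀(t) = 0 and lim_{t→+∞} φ₀(t) = 1, and let 𝔪 = (μ₁, μ₂) with μ₁ < 0 < μ₂ < 1. Define (L_φ₀ y)(t) = (1 + φ₀(t − τ)) y(t) + (φ₀(t) − 1) y(t − τ), (D y)(t) = y'(t) − y(t), (T y)(t) = y'(t) − y(t) + (L_φ₀ y)(t), and (J w)(t) = w(t) − ∫_t^{+∞} e^{t−s}(L_φ₀ w)(s) ds. Then: (i) D, T : C¹_𝔪 → C_𝔪 and J : C_𝔪 → C_𝔪 are bounded linear operators, with |D y|_𝔪 ≤ |y|_{1,𝔪}, |T y|_𝔪 ≤ (3 + e^{−μ₁τ})|y|_{1,𝔪}, and |J y|_𝔪 ≤ (3 + (2 + e^{−μ₁τ})/(1 − μ₂) + e^{−μ₁τ})|y|_𝔪; (ii) D is a bijection from C¹_𝔪 onto C_𝔪, with inverse (D^{−1}y)(t) = −∫_t^{+∞} e^{t−s} y(s) ds satisfying |D^{−1}y|_{1,𝔪} ≤ (3 + 2/(1 −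 μ₂))|y|_𝔪; (iii) T y = D(J y) for every y ∈ C¹_𝔪. -/

import Mathlib

/-!
All estimates are pointwise: `|f s| ≤ A e^{μ₂ s}` for `s ≤ 0` and `|f s| ≤ B e^{μ₁ s}` for `s ≥ 0`
say exactly that the two suprema in `|f|_𝔪` are at most `A` and `B`. Such bounds add up, survive
the delay `s ↦ s - τ` (on `[0, τ]` the delayed argument is negative and the weight `e^{μ₂ s}` is
traded for `e^{μ₁ s}` at the cost of `e^{-μ₁ τ}`), and control `L_φ₀`, since `0 ≤ φ₀ ≤ 1` by
monotonicity. `D⁻¹ g` is the solution of `u' - u = g` that is small at `+∞`; integrating the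
bounds of `g` against `e^{t-s}` bounds it. Finally `J = id + D⁻¹ L_φ₀`, so `D J = D + L_φ₀ = T`.
-/

open Filter MeasureTheory Real Set

def wIic (μ₂ : ℝ) (y : ℝ → ℝ) : Set ℝ := (fun s => Real.exp (-μ₂ * s) * |y s|) '' Iic 0

def wIci (μ₁ : ℝ) (y : ℝ → ℝ) : Set ℝ := (fun s => Real.exp (-μ₁ * s) * |y s|) '' Ici 0

/-- The `C_𝔪`-norm `|y|_𝔪`, `𝔪 = (μ₁, μ₂)`. -/
noncomputable def Cnorm (μ₁ μ₂ : ℝ) (y : ℝ → ℝ) : ℝ := sSup (wIic μ₂ y) + sSup (wIci μ₁ y)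

/-- Membership in `C_𝔪`. -/
def memCm (μ₁ μ₂ : ℝ) (y : ℝ → ℝ) : Prop :=
  Continuous y ∧ BddAbove (wIic μ₂ y) ∧ BddAbove (wIci μ₁ y)

/-- Membership in `C¹_𝔪`. -/
def memC1m (μ₁ μ₂ : ℝ) (y : ℝ → ℝ) : Prop :=
  memCm μ₁ μ₂ y ∧ Differentiable ℝ y ∧ memCm μ₁ μ₂ (deriv y)

/-- The `C¹_𝔪`-norm `|y|_{1,𝔪} = |y|_𝔪 + |y'|_𝔪`. -/
noncomputable def C1norm (μ₁ μ₂ : ℝ) (y : ℝ → ℝ) : ℝ :=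
  Cnorm μ₁ μ₂ y + Cnorm μ₁ μ₂ (deriv y)

/-- `(L_φ₀ y)(t) = (1 + φ₀(t-τ)) y(t) + (φ₀(t) - 1) y(t-τ)`. -/
def Lop (τ : ℝ) (φ₀ y : ℝ → ℝ) (t : ℝ) : ℝ :=
  (1 + φ₀ (t - τ)) * y t + (φ₀ t - 1) * y (t - τ)

/-- `(D y)(t) = y'(t) - y(t)`. -/
noncomputable def Dop (y : ℝ → ℝ) (t : ℝ) : ℝ := deriv y t - y t

/-- `(T y)(t) = y'(t) - y(t) + (L_φ₀ y)(t)`. -/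
noncomputable def Topr (τ : ℝ) (φ₀ y : ℝ → ℝ) (t : ℝ) : ℝ :=
  deriv y t - y t + Lop τ φ₀ y t

/-- `(J w)(t) = w(t) - ∫_t^{+∞} e^{t-s} (L_φ₀ w)(s) ds`. -/
noncomputable def Jop (τ : ℝ) (φ₀ w : ℝ → ℝ) (t : ℝ) : ℝ :=
  w t - ∫ s in Ici t, Real.exp (t - s) * Lop τ φ₀ w s

/-- `(D⁻¹ g)(t) = -∫_t^{+∞} e^{t-s} g(s) ds`. -/
noncomputable def Dinv (g : ℝ → ℝ) (t : ℝ) : ℝ :=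
  -∫ s in Ici t, Real.exp (t - s) * g s

open Topology

def WeightedBound (μ₁ μ₂ A B : ℝ) (f : ℝ → ℝ) : Prop :=
  (∀ s ≤ 0, |f s| ≤ A * exp (μ₂ * s)) ∧ ∀ s, 0 ≤ s → |f s| ≤ B * exp (μ₁ * s)

theorem exp_neg_mul_mul_le_iff {ν s x C : ℝ} : exp (-ν * s) * x ≤ C ↔ x ≤ C * exp (ν * s) := by
  rw [neg_mul, exp_neg, inv_mul_le_iff₀ (exp_pos _), mul_comm]

theorem abs_exp_neg_mul_le {ν C s x : ℝ} (h : |x| ≤ C * exp (ν * s)) :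
    |exp (-s) * x| ≤ C * exp ((ν - 1) * s) := by
  rw [abs_mul, abs_exp]
  calc exp (-s) * |x| ≤ exp (-s) * (C * exp (ν * s)) := by gcongr
    _ = C * exp ((ν - 1) * s) := by rw [mul_left_comm, ← exp_add]; ring_nf

section WeightedBounds

variable {μ₁ μ₂ A B A' B' : ℝ} {f g k : ℝ → ℝ}

namespace WeightedBound

theorem nonneg_left (h : WeightedBound μ₁ μ₂ A B f) : 0 ≤ A := by
  simpa using (abs_nonneg _).trans (h.1 0 le_rfl)

theorem nonneg_right (h : WeightedBound μ₁ μ₂ A B f) : 0 ≤ B := by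
  simpa using (abs_nonneg _).trans (h.2 0 le_rfl)

theorem of_abs_le_add (hf : WeightedBound μ₁ μ₂ A B f) (hg : WeightedBound μ₁ μ₂ A' B' g)
    (hk : ∀ s, |k s| ≤ |f s| + |g s|) : WeightedBound μ₁ μ₂ (A + A') (B + B') k :=
  ⟨fun s hs => (hk s).trans (by rw [add_mul]; exact add_le_add (hf.1 s hs) (hg.1 s hs)),
    fun s hs => (hk s).trans (by rw [add_mul]; exact add_le_add (hf.2 s hs) (hg.2 s hs))⟩

theorem abs_le_mul_exp (hμ₁ : μ₁ ≤ 0) (hμ₂ : 0 ≤ μ₂) (h : WeightedBound μ₁ μ₂ A B f) (s : ℝ) :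
    |f s| ≤ (A + B) * exp (μ₁ * s) := by
  have hA := h.nonneg_left
  have hB := h.nonneg_right
  rcases le_total s 0 with hs | hs
  · calc |f s| ≤ A * exp (μ₂ * s) := h.1 s hs
      _ ≤ (A + B) * exp (μ₁ * s) :=
        mul_le_mul (by linarith) (exp_le_exp.2 (by nlinarith)) (exp_pos _).le (by linarith)
  · calc |f s| ≤ B * exp (μ₁ * s) := h.2 s hs
      _ ≤ (A + B) * exp (μ₁ * s) := by gcongr; linarith

theorem comp_sub_const {τ : ℝ} (hτ : 0 ≤ τ) (hμ₁ : μ₁ ≤ 0) (hμ₂ : 0 ≤ μ₂)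
    (h : WeightedBound μ₁ μ₂ A B f) :
    WeightedBound μ₁ μ₂ A ((A + B) * exp (-μ₁ * τ)) (fun t => f (t - τ)) := by
  have hA := h.nonneg_left
  have hB := h.nonneg_right
  refine ⟨fun t ht => (h.1 _ (by linarith)).trans ?_, fun t ht => ?_⟩
  · gcongr
    nlinarith
  rw [mul_assoc, ← exp_add, show -μ₁ * τ + μ₁ * t = μ₁ * (t - τ) by ring]
  rcases le_total τ t with htτ | htτ
  · calc |f (t - τ)| ≤ B * exp (μ₁ * (t - τ)) := h.2 _ (by linarith)
      _ ≤ (A + B) * exp (μ₁ * (t - τ)) := by gcongr; linarith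
  · calc |f (t - τ)| ≤ A * exp (μ₂ * (t - τ)) := h.1 _ (by linarith)
      _ ≤ (A + B) * exp (μ₁ * (t - τ)) :=
        mul_le_mul (by linarith) (exp_le_exp.2 (by nlinarith)) (exp_pos _).le (by linarith)

theorem memCm_and_Cnorm_le {K : ℝ} (hf : Continuous f) (h : WeightedBound μ₁ μ₂ A B f)
    (hK : A + B ≤ K) : memCm μ₁ μ₂ f ∧ Cnorm μ₁ μ₂ f ≤ K := by
  have hl : ∀ x ∈ wIic μ₂ f, x ≤ A := by
    rintro _ ⟨s, hs, rfl⟩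
    exact exp_neg_mul_mul_le_iff.2 (h.1 s hs)
  have hr : ∀ x ∈ wIci μ₁ f, x ≤ B := by
    rintro _ ⟨s, hs, rfl⟩
    exact exp_neg_mul_mul_le_iff.2 (h.2 s hs)
  refine ⟨⟨hf, ⟨A, hl⟩, ⟨B, hr⟩⟩, le_trans ?_ hK⟩
  exact add_le_add (csSup_le ⟨_, 0, self_mem_Iic, rfl⟩ hl) (csSup_le ⟨_, 0, self_mem_Ici, rfl⟩ hr)

end WeightedBound

theorem weightedBound_of_memCm (h : memCm μ₁ μ₂ f) :
    WeightedBound μ₁ μ₂ (sSup (wIic μ₂ f)) (sSup (wIci μ₁ f)) f :=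
  ⟨fun s hs => exp_neg_mul_mul_le_iff.1 (le_csSup h.2.1 ⟨s, hs, rfl⟩),
    fun s hs => exp_neg_mul_mul_le_iff.1 (le_csSup h.2.2 ⟨s, hs, rfl⟩)⟩

end WeightedBounds

section Delay

variable {τ A B A' B' μ₁ μ₂ : ℝ} {φ₀ y : ℝ → ℝ}

theorem continuous_Lop (hφ : Continuous φ₀) (hy : Continuous y) : Continuous (Lop τ φ₀ y) := by
  unfold Lop; fun_prop

theorem abs_Lop_sub_le (hφ : ∀ x, φ₀ x ∈ Icc (0 : ℝ) 1) (y : ℝ → ℝ) (t : ℝ) :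
    |Lop τ φ₀ y t - y t| ≤ |y t| + |y (t - τ)| := by
  have h₁ : |φ₀ (t - τ)| ≤ 1 := abs_le.2 ⟨by linarith [(hφ (t - τ)).1], (hφ (t - τ)).2⟩
  have h₂ : |φ₀ t - 1| ≤ 1 := abs_le.2 ⟨by linarith [(hφ t).1], by linarith [(hφ t).2]⟩
  calc |Lop τ φ₀ y t - y t| = |φ₀ (t - τ) * y t + (φ₀ t - 1) * y (t - τ)| := by
        unfold Lop; ring_nf
    _ ≤ |φ₀ (t - τ)| * |y t| + |φ₀ t - 1| * |y (t - τ)| := by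
        rw [← abs_mul, ← abs_mul]; exact abs_add_le _ _
    _ ≤ |y t| + |y (t - τ)| :=
        add_le_add (mul_le_of_le_one_left (abs_nonneg _) h₁)
          (mul_le_of_le_one_left (abs_nonneg _) h₂)

theorem Topr_eq (t : ℝ) : Topr τ φ₀ y t = deriv y t + (Lop τ φ₀ y t - y t) := by
  unfold Topr; ring

theorem weightedBound_Lop_sub (hφ : ∀ x, φ₀ x ∈ Icc (0 : ℝ) 1) (hτ : 0 ≤ τ) (hμ₁ : μ₁ ≤ 0)
    (hμ₂ : 0 ≤ μ₂) (h : WeightedBound μ₁ μ₂ A B y) :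
    WeightedBound μ₁ μ₂ (A + A) (B + (A + B) * exp (-μ₁ * τ)) (fun t => Lop τ φ₀ y t - y t) :=
  h.of_abs_le_add (h.comp_sub_const hτ hμ₁ hμ₂) (abs_Lop_sub_le hφ y)

theorem weightedBound_Lop (hφ : ∀ x, φ₀ x ∈ Icc (0 : ℝ) 1) (hτ : 0 ≤ τ) (hμ₁ : μ₁ ≤ 0)
    (hμ₂ : 0 ≤ μ₂) (h : WeightedBound μ₁ μ₂ A B y) :
    WeightedBound μ₁ μ₂ (A + (A + A)) (B + (B + (A + B) * exp (-μ₁ * τ))) (Lop τ φ₀ y) :=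
  h.of_abs_le_add (weightedBound_Lop_sub hφ hτ hμ₁ hμ₂ h) fun t => by
    simpa using abs_add_le (y t) (Lop τ φ₀ y t - y t)

theorem weightedBound_Topr (hφ : ∀ x, φ₀ x ∈ Icc (0 : ℝ) 1) (hτ : 0 ≤ τ) (hμ₁ : μ₁ ≤ 0)
    (hμ₂ : 0 ≤ μ₂) (h : WeightedBound μ₁ μ₂ A B y) (h' : WeightedBound μ₁ μ₂ A' B' (deriv y)) :
    WeightedBound μ₁ μ₂ (A' + (A + A)) (B' + (B + (A + B) * exp (-μ₁ * τ))) (Topr τ φ₀ y) :=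
  h'.of_abs_le_add (weightedBound_Lop_sub hφ hτ hμ₁ hμ₂ h) fun t => by
    rw [Topr_eq]; exact abs_add_le _ _

end Delay

section Dinv

variable {μ₁ μ₂ A B ν C t : ℝ} {g y : ℝ → ℝ}

theorem Dinv_eq (g : ℝ → ℝ) (t : ℝ) : Dinv g t = -(exp t * ∫ s in Ioi t, exp (-s) * g s) := by
  rw [Dinv, integral_Ici_eq_integral_Ioi, ← integral_const_mul]
  congr 2 with s
  rw [← mul_assoc, ← exp_add, sub_eq_add_neg]

theorem integrableOn_exp_neg_mul (hg : Continuous g) (hν : ν < 1)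
    (h : ∀ s, |g s| ≤ C * exp (ν * s)) (t : ℝ) :
    IntegrableOn (fun s => exp (-s) * g s) (Ioi t) :=
  ((integrableOn_exp_mul_Ioi (by linarith) t).const_mul C).mono'
    (by fun_prop : Continuous fun s => exp (-s) * g s).aestronglyMeasurable
    (ae_of_all _ fun s => abs_exp_neg_mul_le (h s))

theorem tendsto_exp_neg_mul (hν : ν < 1) (h : ∀ s, |g s| ≤ C * exp (ν * s)) :
    Tendsto (fun s => exp (-s) * g s) atTop (𝓝 0) := by
  have hlim : Tendsto (fun s => C * exp ((ν - 1) * s)) atTop (𝓝 0) := by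
    simpa using (tendsto_exp_atBot.comp
      (tendsto_id.const_mul_atTop_of_neg (by linarith : ν - 1 < 0))).const_mul C
  exact squeeze_zero_norm (fun s => abs_exp_neg_mul_le (h s)) hlim

theorem hasDerivAt_Dinv (hg : Continuous g) (hint : IntegrableOn (fun s => exp (-s) * g s) (Ioi 0))
    (t : ℝ) : HasDerivAt (Dinv g) (Dinv g t + g t) t := by
  have hc : Continuous fun s => exp (-s) * g s := by fun_prop
  set I := ∫ s in Ioi 0, exp (-s) * g s
  have hrepr : Dinv g = fun u => -(exp u * (I - ∫ s in (0)..u, exp (-s) * g s)) := by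
    funext u
    rw [Dinv_eq, ← intervalIntegral.integral_interval_add_Ioi' (hc.intervalIntegrable u 0) hint,
      intervalIntegral.integral_symm]
    ring
  have hd : HasDerivAt (fun u => -(exp u * (I - ∫ s in (0)..u, exp (-s) * g s)))
      (-(exp t * (I - ∫ s in (0)..t, exp (-s) * g s) + exp t * (0 - exp (-t) * g t))) t :=
    ((hasDerivAt_exp t).mul
      ((hasDerivAt_const t I).sub (hc.integral_hasStrictDerivAt 0 t).hasDerivAt)).neg
  rw [hrepr]
  refine hd.congr_deriv ?_
  have he : exp t * exp (-t) = 1 := by rw [← exp_add, add_neg_cancel, exp_zero]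
  linear_combination he * g t

theorem Dinv_Dop (hy : Differentiable ℝ y)
    (hint : IntegrableOn (fun s => exp (-s) * Dop y s) (Ioi t))
    (hlim : Tendsto (fun s => exp (-s) * y s) atTop (𝓝 0)) : Dinv (Dop y) t = y t := by
  have hderiv : ∀ s ∈ Ici t, HasDerivAt (fun s => exp (-s) * y s) (exp (-s) * Dop y s) s := by
    intro s _
    refine ((hasDerivAt_neg s).exp.mul (hy s).hasDerivAt).congr_deriv ?_
    unfold Dop; ring
  rw [Dinv_eq, integral_Ioi_of_hasDerivAt_of_tendsto' hderiv hint hlim, zero_sub, mul_neg, neg_neg,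
    ← mul_assoc, ← exp_add, add_neg_cancel, exp_zero, one_mul]

theorem abs_Dinv_le {m : ℝ → ℝ} (hm : IntegrableOn m (Ioi t))
    (h : ∀ s ∈ Ioi t, |exp (-s) * g s| ≤ m s) : |Dinv g t| ≤ exp t * ∫ s in Ioi t, m s := by
  rw [Dinv_eq, abs_neg, abs_mul, abs_exp]
  gcongr
  exact norm_integral_le_of_norm_le (f := fun s => exp (-s) * g s) hm
    ((ae_restrict_iff' measurableSet_Ioi).2 (ae_of_all _ h))

theorem integral_exp_sub_one_mul_Ioi {ν : ℝ} (hν : ν < 1) (t : ℝ) :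
    ∫ s in Ioi t, exp ((ν - 1) * s) = exp ((ν - 1) * t) / (1 - ν) := by
  rw [integral_exp_mul_Ioi (by linarith), neg_div, ← div_neg, neg_sub]

theorem abs_Dinv_le_of_nonneg (hμ₁ : μ₁ ≤ 0) (h : WeightedBound μ₁ μ₂ A B g) (ht : 0 ≤ t) :
    |Dinv g t| ≤ B * exp (μ₁ * t) := by
  have hμ : μ₁ - 1 < 0 := by linarith
  calc |Dinv g t| ≤ exp t * ∫ s in Ioi t, B * exp ((μ₁ - 1) * s) :=
        abs_Dinv_le ((integrableOn_exp_mul_Ioi hμ t).const_mul B) fun s hs =>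
          abs_exp_neg_mul_le (h.2 s (ht.trans hs.le))
    _ = B * exp (μ₁ * t) / (1 - μ₁) := by
        rw [integral_const_mul, integral_exp_sub_one_mul_Ioi (by linarith),
          show μ₁ * t = t + (μ₁ - 1) * t by ring, exp_add]
        ring
    _ ≤ B * exp (μ₁ * t) := div_le_self (by have := h.nonneg_right; positivity) (by linarith)

theorem abs_Dinv_le_of_nonpos (hμ₁ : μ₁ ≤ 0) (hμ₂ : μ₂ < 1) (h : WeightedBound μ₁ μ₂ A B g)
    (ht : t ≤ 0) : |Dinv g t| ≤ (A / (1 - μ₂) + B) * exp (μ₂ * t) := by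
  have hμ₁' : μ₁ - 1 < 0 := by linarith
  have hμ₂' : μ₂ - 1 < 0 := by linarith
  have hA := h.nonneg_left
  have hB := h.nonneg_right
  have hIA : IntegrableOn (fun s => A * exp ((μ₂ - 1) * s)) (Ioi t) :=
    (integrableOn_exp_mul_Ioi hμ₂' t).const_mul A
  have hIB : IntegrableOn ((Ioi 0).indicator fun s => B * exp ((μ₁ - 1) * s)) (Ioi t) :=
    (integrableOn_indicator_iff measurableSet_Ioi).2
      (IntegrableOn.mono_set ((integrableOn_exp_mul_Ioi hμ₁' 0).const_mul B) inter_subset_left)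
  -- Beyond `0` the majorant keeps the weight `e^{μ₁ s}`: using `e^{μ₂ s}` there too would put
  -- the factor `1 / (1 - μ₂)` on `B` as well.
  set m := fun s =>
    A * exp ((μ₂ - 1) * s) + (Ioi 0).indicator (fun s => B * exp ((μ₁ - 1) * s)) s
  have hm : IntegrableOn m (Ioi t) := hIA.add hIB
  have hgm : ∀ s ∈ Ioi t, |exp (-s) * g s| ≤ m s := by
    intro s _
    rcases le_or_gt s 0 with hs | hs
    · have : 0 ≤ (Ioi 0).indicator (fun s => B * exp ((μ₁ - 1) * s)) s :=
        indicator_nonneg (fun _ _ => by positivity) s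
      linarith [abs_exp_neg_mul_le (h.1 s hs)]
    · have := abs_exp_neg_mul_le (h.2 s hs.le)
      simp only [m, indicator_of_mem (show s ∈ Ioi 0 from hs)]
      linarith [show 0 ≤ A * exp ((μ₂ - 1) * s) by positivity]
  have hm_integral :
      ∫ s in Ioi t, m s = A * (exp ((μ₂ - 1) * t) / (1 - μ₂)) + B / (1 - μ₁) := by
    rw [integral_add hIA hIB, integral_const_mul,
      integral_exp_sub_one_mul_Ioi hμ₂, integral_indicator measurableSet_Ioi,
      Measure.restrict_restrict measurableSet_Ioi, Ioi_inter_Ioi, sup_of_le_left ht,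
      integral_const_mul, integral_exp_sub_one_mul_Ioi (by linarith), mul_zero, exp_zero,
      mul_one_div]
  calc |Dinv g t| ≤ exp t * ∫ s in Ioi t, m s := abs_Dinv_le hm hgm
    _ = A / (1 - μ₂) * exp (μ₂ * t) + exp t * (B / (1 - μ₁)) := by
        rw [hm_integral, show μ₂ * t = t + (μ₂ - 1) * t by ring, exp_add]; ring
    _ ≤ A / (1 - μ₂) * exp (μ₂ * t) + exp (μ₂ * t) * B := by
        refine add_le_add_right (mul_le_mul (exp_le_exp.2 (by nlinarith))
          (div_le_self hB (by linarith)) (div_nonneg hB (by linarith)) (exp_pos _).le) _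
    _ = (A / (1 - μ₂) + B) * exp (μ₂ * t) := by ring

theorem weightedBound_Dinv (hμ₁ : μ₁ ≤ 0) (hμ₂ : μ₂ < 1) (h : WeightedBound μ₁ μ₂ A B g) :
    WeightedBound μ₁ μ₂ (A / (1 - μ₂) + B) B (Dinv g) :=
  ⟨fun _ ht => abs_Dinv_le_of_nonpos hμ₁ hμ₂ h ht, fun _ ht => abs_Dinv_le_of_nonneg hμ₁ h ht⟩

theorem hasDerivAt_Dinv_of_weightedBound (hμ₁ : μ₁ ≤ 0) (hμ₂ : 0 ≤ μ₂) (hg : Continuous g)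
    (h : WeightedBound μ₁ μ₂ A B g) (t : ℝ) : HasDerivAt (Dinv g) (Dinv g t + g t) t :=
  hasDerivAt_Dinv hg (integrableOn_exp_neg_mul hg (by linarith) (h.abs_le_mul_exp hμ₁ hμ₂) 0) t

end Dinv

section Operators

variable {τ μ₁ μ₂ A B A' B' : ℝ} {φ₀ y g : ℝ → ℝ}

theorem weightedBound_Dop (h : WeightedBound μ₁ μ₂ A B y)
    (h' : WeightedBound μ₁ μ₂ A' B' (deriv y)) : WeightedBound μ₁ μ₂ (A' + A) (B' + B) (Dop y) :=
  h'.of_abs_le_add h fun _ => abs_sub _ _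

theorem Jop_eq (t : ℝ) : Jop τ φ₀ y t = y t + Dinv (Lop τ φ₀ y) t := by
  unfold Jop Dinv; ring

theorem memCm_Dop_and_Cnorm_le (hy : memC1m μ₁ μ₂ y) :
    memCm μ₁ μ₂ (Dop y) ∧ Cnorm μ₁ μ₂ (Dop y) ≤ C1norm μ₁ μ₂ y := by
  obtain ⟨hy, -, hy'⟩ := hy
  refine (weightedBound_Dop (weightedBound_of_memCm hy)
    (weightedBound_of_memCm hy')).memCm_and_Cnorm_le (hy'.1.sub hy.1) ?_
  unfold C1norm Cnorm
  linarith

theorem memCm_Topr_and_Cnorm_le (hφ : ∀ x, φ₀ x ∈ Icc (0 : ℝ) 1) (hφc : Continuous φ₀)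
    (hτ : 0 ≤ τ) (hμ₁ : μ₁ ≤ 0) (hμ₂ : 0 ≤ μ₂) (hy : memC1m μ₁ μ₂ y) :
    memCm μ₁ μ₂ (Topr τ φ₀ y) ∧
      Cnorm μ₁ μ₂ (Topr τ φ₀ y) ≤ (3 + exp (-μ₁ * τ)) * C1norm μ₁ μ₂ y := by
  obtain ⟨hy, -, hy'⟩ := hy
  have h := weightedBound_of_memCm hy
  have h' := weightedBound_of_memCm hy'
  have hE : 1 ≤ exp (-μ₁ * τ) := one_le_exp (by nlinarith)
  refine (weightedBound_Topr hφ hτ hμ₁ hμ₂ h h').memCm_and_Cnorm_le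
    ((hy'.1.sub hy.1).add (continuous_Lop hφc hy.1)) ?_
  unfold C1norm Cnorm
  nlinarith [h.nonneg_left, h.nonneg_right, h'.nonneg_left, h'.nonneg_right]

theorem memCm_Jop_and_Cnorm_le (hφ : ∀ x, φ₀ x ∈ Icc (0 : ℝ) 1) (hφc : Continuous φ₀)
    (hτ : 0 ≤ τ) (hμ₁ : μ₁ ≤ 0) (hμ₂ : 0 ≤ μ₂) (hμ₂' : μ₂ < 1) (hy : memCm μ₁ μ₂ y) :
    memCm μ₁ μ₂ (Jop τ φ₀ y) ∧ Cnorm μ₁ μ₂ (Jop τ φ₀ y) ≤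
      (3 + (2 + exp (-μ₁ * τ)) / (1 - μ₂) + exp (-μ₁ * τ)) * Cnorm μ₁ μ₂ y := by
  have h := weightedBound_of_memCm hy
  have hL := weightedBound_Lop hφ hτ hμ₁ hμ₂ h
  have hD := hasDerivAt_Dinv_of_weightedBound hμ₁ hμ₂ (continuous_Lop hφc hy.1) hL
  have hJc : Continuous (Jop τ φ₀ y) := by
    rw [show Jop τ φ₀ y = _ from funext Jop_eq]
    exact hy.1.add (continuous_iff_continuousAt.2 fun t => (hD t).continuousAt)
  refine (h.of_abs_le_add (weightedBound_Dinv hμ₁ hμ₂' hL) fun t => by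
    rw [Jop_eq]; exact abs_add_le _ _).memCm_and_Cnorm_le hJc ?_
  have hE : 1 ≤ exp (-μ₁ * τ) := one_le_exp (by nlinarith)
  have hu : 1 ≤ (1 - μ₂)⁻¹ := one_le_inv₀ (by linarith) |>.2 (by linarith)
  have hA := h.nonneg_left
  have hB := h.nonneg_right
  unfold Cnorm
  simp only [div_eq_mul_inv]
  nlinarith [mul_nonneg (mul_nonneg hA (sub_nonneg.2 hE)) (sub_nonneg.2 hu),
    mul_nonneg hB (sub_nonneg.2 hu), mul_nonneg (mul_nonneg hB (sub_nonneg.2 hE)) (sub_nonneg.2 hu)]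

theorem memC1m_Dinv_and_C1norm_le (hμ₁ : μ₁ ≤ 0) (hμ₂ : 0 ≤ μ₂) (hμ₂' : μ₂ < 1)
    (hg : memCm μ₁ μ₂ g) :
    memC1m μ₁ μ₂ (Dinv g) ∧ (∀ t, Dop (Dinv g) t = g t) ∧
      C1norm μ₁ μ₂ (Dinv g) ≤ (3 + 2 / (1 - μ₂)) * Cnorm μ₁ μ₂ g := by
  have h := weightedBound_of_memCm hg
  have hD := hasDerivAt_Dinv_of_weightedBound hμ₁ hμ₂ hg.1 h
  have hdiff : Differentiable ℝ (Dinv g) := fun t => (hD t).differentiableAt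
  have hderiv : deriv (Dinv g) = fun t => Dinv g t + g t := funext fun t => (hD t).deriv
  have hDinv := weightedBound_Dinv hμ₁ hμ₂' h
  obtain ⟨hmem, hle⟩ := hDinv.memCm_and_Cnorm_le hdiff.continuous le_rfl
  have hDinv' : WeightedBound μ₁ μ₂ _ _ (deriv (Dinv g)) :=
    hDinv.of_abs_le_add h fun t => by rw [hderiv]; exact abs_add_le _ _
  obtain ⟨hmem', hle'⟩ :=
    hDinv'.memCm_and_Cnorm_le (by rw [hderiv]; exact hdiff.continuous.add hg.1) le_rfl
  refine ⟨⟨hmem, hdiff, hmem'⟩, fun t => by rw [Dop, hderiv]; ring, ?_⟩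
  have hu : 1 ≤ (1 - μ₂)⁻¹ := one_le_inv₀ (by linarith) |>.2 (by linarith)
  have hA := h.nonneg_left
  have hB := h.nonneg_right
  refine (add_le_add hle hle').trans ?_
  unfold Cnorm
  simp only [div_eq_mul_inv]
  nlinarith [mul_nonneg hB (sub_nonneg.2 hu)]

theorem Dinv_Dop_of_memC1m (hμ₁ : μ₁ ≤ 0) (hμ₂ : 0 ≤ μ₂) (hy : memC1m μ₁ μ₂ y) (t : ℝ) :
    Dinv (Dop y) t = y t := by
  obtain ⟨hy, hdiff, hy'⟩ := hy
  have h := weightedBound_of_memCm hy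
  have hDop := weightedBound_Dop h (weightedBound_of_memCm hy')
  exact Dinv_Dop hdiff
    (integrableOn_exp_neg_mul (hy'.1.sub hy.1) (by linarith) (hDop.abs_le_mul_exp hμ₁ hμ₂) t)
    (tendsto_exp_neg_mul (by linarith) (h.abs_le_mul_exp hμ₁ hμ₂))

theorem Topr_eq_deriv_Jop_sub (hφ : ∀ x, φ₀ x ∈ Icc (0 : ℝ) 1) (hφc : Continuous φ₀)
    (hτ : 0 ≤ τ) (hμ₁ : μ₁ ≤ 0) (hμ₂ : 0 ≤ μ₂) (hy : memC1m μ₁ μ₂ y) (t : ℝ) :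
    Topr τ φ₀ y t = deriv (Jop τ φ₀ y) t - Jop τ φ₀ y t := by
  obtain ⟨hy, hdiff, -⟩ := hy
  have hD := hasDerivAt_Dinv_of_weightedBound hμ₁ hμ₂ (continuous_Lop hφc hy.1)
    (weightedBound_Lop hφ hτ hμ₁ hμ₂ (weightedBound_of_memCm hy)) t
  have hJ : HasDerivAt (Jop τ φ₀ y) (deriv y t + (Dinv (Lop τ φ₀ y) t + Lop τ φ₀ y t)) t := by
    rw [show Jop τ φ₀ y = _ from funext Jop_eq]
    exact (hdiff t).hasDerivAt.add hD
  rw [hJ.deriv, Jop_eq, Topr]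
  ring

end Operators

/-- boundedness of the linear operators `D`, `T`, `J` between
the weighted spaces `C¹_𝔪` and `C_𝔪` with the explicit constants, bijectivity
of `D` with explicit inverse and bound, and the factorization `T = D ∘ J` on
`C¹_𝔪`. -/
theorem operators_bounded_D_bijective_T_eq_DJ
    (τ : ℝ) (hτ : 0 < τ)
    (φ₀ : ℝ → ℝ) (hφ₀mono : StrictMono φ₀)
    (hφ₀eq : ∀ t, HasDerivAt φ₀ (φ₀ (t - τ) * (1 - φ₀ t)) t)
    (hφ₀bot : Tendsto φ₀ atBot (nhds 0)) (hφ₀top : Tendsto φ₀ atTop (nhds 1))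
    (μ₁ μ₂ : ℝ) (hμ₁ : μ₁ < 0) (hμ₂0 : 0 < μ₂) (hμ₂1 : μ₂ < 1) :
    -- (i) D, T : C¹_𝔪 → C_𝔪 and J : C_𝔪 → C_𝔪 are bounded
    (∀ y : ℝ → ℝ, memC1m μ₁ μ₂ y →
      memCm μ₁ μ₂ (Dop y) ∧ Cnorm μ₁ μ₂ (Dop y) ≤ C1norm μ₁ μ₂ y) ∧
    (∀ y : ℝ → ℝ, memC1m μ₁ μ₂ y →
      memCm μ₁ μ₂ (Topr τ φ₀ y) ∧
      Cnorm μ₁ μ₂ (Topr τ φ₀ y) ≤ (3 + Real.exp (-μ₁ * τ)) * C1norm μ₁ μ₂ y) ∧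
    (∀ y : ℝ → ℝ, memCm μ₁ μ₂ y →
      memCm μ₁ μ₂ (Jop τ φ₀ y) ∧
      Cnorm μ₁ μ₂ (Jop τ φ₀ y) ≤
        (3 + (2 + Real.exp (-μ₁ * τ)) / (1 - μ₂) + Real.exp (-μ₁ * τ)) *
          Cnorm μ₁ μ₂ y) ∧
    -- (ii) D is a bijection from C¹_𝔪 onto C_𝔪 with the explicit inverse
    (∀ g : ℝ → ℝ, memCm μ₁ μ₂ g →
      memC1m μ₁ μ₂ (Dinv g) ∧ (∀ t, Dop (Dinv g) t = g t) ∧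
      C1norm μ₁ μ₂ (Dinv g) ≤ (3 + 2 / (1 - μ₂)) * Cnorm μ₁ μ₂ g) ∧
    (∀ y : ℝ → ℝ, memC1m μ₁ μ₂ y → ∀ t, Dinv (Dop y) t = y t) ∧
    -- (iii) T y = D (J y) on C¹_𝔪
    (∀ y : ℝ → ℝ, memC1m μ₁ μ₂ y →
      ∀ t, Topr τ φ₀ y t = deriv (Jop τ φ₀ y) t - Jop τ φ₀ y t) := by
  have hφ : ∀ x, φ₀ x ∈ Icc (0 : ℝ) 1 := fun x =>
    ⟨hφ₀mono.monotone.le_of_tendsto hφ₀bot x, hφ₀mono.monotone.ge_of_tendsto hφ₀top x⟩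
  have hφc : Continuous φ₀ := continuous_iff_continuousAt.2 fun t => (hφ₀eq t).continuousAt
  exact ⟨fun _ => memCm_Dop_and_Cnorm_le,
    fun _ => memCm_Topr_and_Cnorm_le hφ hφc hτ.le hμ₁.le hμ₂0.le,
    fun _ => memCm_Jop_and_Cnorm_le hφ hφc hτ.le hμ₁.le hμ₂0.le hμ₂1,
    fun _ => memC1m_Dinv_and_C1norm_le hμ₁.le hμ₂0.le hμ₂1,
    fun _ => Dinv_Dop_of_memC1m hμ₁.le hμ₂0.le,
    fun _ => Topr_eq_deriv_Jop_sub hφ hφc hτ.le hμ₁.le hμ₂0.le⟩
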